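/- arXiv:1909.08065 — 2 statements merged into one kernel-verified Lean document; each statement's English description precedes it below -/
import Mathlib

section
/- If there is a function x: 𝓑 → (0,1) such that p(B) ≤ x(B) · Π_{A ∈ Γ(B)} (1 − x(A)) for all B ∈ 𝓑, then the Shearer criterion is satisfied and μ(B) ≤ x(B)/(1 − x(B)) for all B ∈ 𝓑. -/
open scoped ENNReal BigOperators Classical

noncomputable section

variable {β : Type*}

/-- A set of bad-events is stable if no two distinct members are dependent. -/
def IsStable (dep : β → β → Prop) (I : Finset β) : Prop :=
  ∀ A ∈ I, ∀ B ∈ I, A ≠ B → ¬ dep A B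

/-- Inclusive neighborhood Γ̄(B) = Γ(B) ∪ {B}. -/
def inclNbhd [Fintype β] (dep : β → β → Prop) (B : β) : Finset β :=
  Finset.univ.filter fun A => A = B ∨ dep A B

/-- Neighborhood Γ(B). -/
def nbhd [Fintype β] (dep : β → β → Prop) (B : β) : Finset β :=
  Finset.univ.filter fun A => A ≠ B ∧ dep A B

/-- stab(I): all stable subsets of ⋃_{B ∈ I} Γ̄(B). -/
def stab [Fintype β] (dep : β → β → Prop) (I : Finset β) : Finset (Finset β) :=
  Finset.univ.filter fun J => IsStable dep J ∧ J ⊆ I.biUnion (inclNbhd dep)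

/-- A stable-set sequence rooted at `I`. -/
structure StableSeq [Fintype β] (dep : β → β → Prop) (I : Finset β) where
  seq : ℕ → Finset β
  root : seq 0 = I
  stable : ∀ i, IsStable dep (seq i)
  step : ∀ i, seq (i + 1) ∈ stab dep (seq i)
  fin : ∃ ℓ, seq ℓ = ∅

/-- The depth of a stable-set sequence: the least ℓ with S_ℓ = ∅. -/
def StableSeq.depth [Fintype β] {dep : β → β → Prop} {I : Finset β}
    (S : StableSeq dep I) : ℕ :=
  Nat.find S.fin

/-- The weight Π_i p(S_i) of a stable-set sequence. -/
def StableSeq.weight [Fintype β] {dep : β → β → Prop} {I : Finset β}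
    (p : β → ℝ≥0∞) (S : StableSeq dep I) : ℝ≥0∞ :=
  ∏ i ∈ Finset.range S.depth, ∏ B ∈ S.seq i, p B

/-- μ(I): total weight of all stable-set sequences rooted at I. -/
def mu [Fintype β] (dep : β → β → Prop) (p : β → ℝ≥0∞) (I : Finset β) : ℝ≥0∞ :=
  ∑' S : StableSeq dep I, S.weight p

/-- μ^{(h)}(I): total weight of stable-set sequences rooted at I of depth ≤ h. -/
def muD [Fintype β] (dep : β → β → Prop) (p : β → ℝ≥0∞) (I : Finset β) (h : ℕ) : ℝ≥0∞ :=
  ∑' S : {S : StableSeq dep I // S.depth ≤ h}, S.1.weight p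

/-- α(B) = Σ_{J ∈ stab(B)} μ(J). -/
def alphaB [Fintype β] (dep : β → β → Prop) (p : β → ℝ≥0∞) (B : β) : ℝ≥0∞ :=
  ∑ J ∈ stab dep {B}, mu dep p J

/-- The Shearer criterion: μ(B) < ∞ for all bad-events B. -/
def ShearerCrit [Fintype β] (dep : β → β → Prop) (p : β → ℝ≥0∞) : Prop :=
  ∀ B : β, mu dep p {B} < ⊤

section Aux

variable [Fintype β] {dep : β → β → Prop}

theorem StableSeq.ext' {I : Finset β} {S T : StableSeq dep I} (h : S.seq = T.seq) : S = T := by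
  cases S; cases T; cases h; rfl

lemma StableSeq.seq_depth {I : Finset β} (S : StableSeq dep I) : S.seq S.depth = ∅ :=
  Nat.find_spec S.fin

lemma StableSeq.depth_le {I : Finset β} (S : StableSeq dep I) {n : ℕ} (h : S.seq n = ∅) :
    S.depth ≤ n := Nat.find_le h

lemma empty_mem_stab (I : Finset β) : (∅ : Finset β) ∈ stab dep I := by
  exact Finset.mem_filter.mpr ⟨Finset.mem_univ _, by simp [IsStable], Finset.empty_subset _⟩

lemma stab_empty_subset {J : Finset β} (h : J ∈ stab dep (∅ : Finset β)) : J = ∅ := by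
  have h2 := (Finset.mem_filter.mp h).2.2
  exact Finset.subset_empty.mp (by simpa using h2)

/-- The unique stable-set sequence rooted at ∅. -/
def emptySeq : StableSeq dep (∅ : Finset β) :=
  ⟨fun _ => ∅, rfl, fun _ A hA => absurd hA (Finset.notMem_empty A),
   fun _ => empty_mem_stab _, ⟨0, rfl⟩⟩

lemma eq_emptySeq (S : StableSeq dep (∅ : Finset β)) : S = emptySeq := by
  apply StableSeq.ext'
  funext n
  show S.seq n = ∅
  induction n with
  | zero => exact S.root
  | succ k ih =>
    have h := S.step k
    rw [ih] at h
    exact stab_empty_subset h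

lemma muD_empty (p : β → ℝ≥0∞) (h : ℕ) : muD dep p (∅ : Finset β) h = 1 := by
  have hd : (emptySeq : StableSeq dep (∅ : Finset β)).depth = 0 :=
    Nat.le_zero.mp (StableSeq.depth_le _ rfl)
  rw [muD, tsum_eq_single (⟨emptySeq, by rw [hd]; exact Nat.zero_le _⟩ :
      {S : StableSeq dep (∅ : Finset β) // S.depth ≤ h})]
  · simp [StableSeq.weight, hd]
  · intro S' hS'
    exact absurd (Subtype.ext (eq_emptySeq S'.1)) hS'

/-- The tail of a stable-set sequence. -/
def StableSeq.tail {I : Finset β} (S : StableSeq dep I) : StableSeq dep (S.seq 1) :=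
  ⟨fun n => S.seq (n + 1), rfl, fun i => S.stable (i + 1), fun i => S.step (i + 1),
   ⟨S.depth, by
      have h := S.step S.depth
      rw [S.seq_depth] at h
      exact stab_empty_subset h⟩⟩

lemma StableSeq.depth_pos {I : Finset β} (S : StableSeq dep I) (hI : I ≠ ∅) : 0 < S.depth := by
  rcases Nat.eq_zero_or_pos S.depth with h0 | h0
  · exact absurd (by rw [← S.root, ← h0]; exact S.seq_depth) hI
  · exact h0

lemma StableSeq.tail_depth {I : Finset β} (S : StableSeq dep I) (hI : I ≠ ∅) :
    S.tail.depth + 1 = S.depth := by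
  have h1 : 0 < S.depth := S.depth_pos hI
  apply le_antisymm
  · have h2 : S.tail.seq (S.depth - 1) = ∅ := by
      show S.seq (S.depth - 1 + 1) = ∅
      rw [show S.depth - 1 + 1 = S.depth from by omega]
      exact S.seq_depth
    have := S.tail.depth_le h2
    omega
  · exact S.depth_le (S.tail.seq_depth)

lemma StableSeq.weight_tail {I : Finset β} (S : StableSeq dep I) (hI : I ≠ ∅) (p : β → ℝ≥0∞) :
    S.weight p = (∏ B ∈ I, p B) * S.tail.weight p := by
  unfold StableSeq.weight
  rw [← S.tail_depth hI, Finset.prod_range_succ']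
  have h0 : S.seq 0 = I := S.root
  rw [h0, mul_comm]
  rfl

lemma muD_succ_le {I : Finset β} (p : β → ℝ≥0∞) (hI : I ≠ ∅) (h : ℕ) :
    muD dep p I (h + 1) ≤ (∏ B ∈ I, p B) * ∑ J ∈ stab dep I, muD dep p J h := by
  classical
  let σt := (J : {J // J ∈ stab dep I}) × {T : StableSeq dep J.1 // T.depth ≤ h}
  let i : {S : StableSeq dep I // S.depth ≤ h + 1} → σt := fun S =>
    ⟨⟨S.1.seq 1, by have h0 := S.1.step 0; rwa [S.1.root] at h0⟩,
     ⟨S.1.tail, by have := S.1.tail_depth hI; omega⟩⟩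
  have hinj : Function.Injective i := by
    intro S1 S2 he
    apply Subtype.ext
    apply StableSeq.ext'
    funext n
    cases n with
    | zero => rw [S1.1.root, S2.1.root]
    | succ k =>
      exact congrFun (congrArg (fun z : σt => z.2.1.seq) he) k
  calc muD dep p I (h + 1)
      = ∑' S : {S : StableSeq dep I // S.depth ≤ h + 1},
          ((∏ B ∈ I, p B) * (i S).2.1.weight p) := by
        rw [muD]
        exact tsum_congr fun S => S.1.weight_tail hI p
    _ ≤ ∑' z : σt, ((∏ B ∈ I, p B) * z.2.1.weight p) :=
        ENNReal.tsum_comp_le_tsum_of_injective hinj _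
    _ = ∑' (J : {J // J ∈ stab dep I}) (T : {T : StableSeq dep J.1 // T.depth ≤ h}),
          ((∏ B ∈ I, p B) * T.1.weight p) :=
        ENNReal.tsum_sigma fun (J : {J // J ∈ stab dep I})
          (T : {T : StableSeq dep J.1 // T.depth ≤ h}) => (∏ B ∈ I, p B) * T.1.weight p
    _ = ∑' J : {J // J ∈ stab dep I}, ((∏ B ∈ I, p B) * muD dep p J.1 h) := by
        exact tsum_congr fun J => ENNReal.tsum_mul_left
    _ = (∏ B ∈ I, p B) * ∑' J : {J // J ∈ stab dep I}, muD dep p J.1 h :=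
        ENNReal.tsum_mul_left
    _ = (∏ B ∈ I, p B) * ∑ J ∈ stab dep I, muD dep p J h := by
        rw [Finset.tsum_subtype (stab dep I) (fun J => muD dep p J h)]

end Aux

/-- the asymmetric LLL criterion implies the Shearer criterion,
with μ(B) ≤ x(B)/(1-x(B)). -/
theorem asymmetric_LLL_implies_Shearer [Fintype β] (dep : β → β → Prop)
    (hsym : Symmetric dep) (p : β → ℝ≥0∞) (x : β → ℝ)
    (hx : ∀ B, 0 < x B ∧ x B < 1)
    (hcrit : ∀ B, p B ≤ ENNReal.ofReal (x B * ∏ A ∈ nbhd dep B, (1 - x A))) :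
    ShearerCrit dep p ∧ ∀ B : β, mu dep p {B} ≤ ENNReal.ofReal (x B / (1 - x B)) := by
  classical
  set F : β → ℝ≥0∞ := fun A => ENNReal.ofReal (x A / (1 - x A)) with hF
  set q : β → ℝ≥0∞ := fun A => ENNReal.ofReal (1 - x A) with hq
  have hpos : ∀ A, (0:ℝ) < 1 - x A := fun A => by linarith [(hx A).2]
  have hq1 : ∀ A, q A ≤ 1 := fun A => ENNReal.ofReal_le_one.mpr (by linarith [(hx A).1])
  have hqF : ∀ A, q A * (1 + F A) = 1 := by
    intro A
    have hd : (0:ℝ) ≤ x A / (1 - x A) := div_nonneg (hx A).1.le (hpos A).le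
    have : (1:ℝ≥0∞) + F A = ENNReal.ofReal (1 + x A / (1 - x A)) := by
      rw [ENNReal.ofReal_add (by norm_num) hd, ENNReal.ofReal_one]
    rw [this, hq, ← ENNReal.ofReal_mul (hpos A).le]
    rw [show (1 - x A) * (1 + x A / (1 - x A)) = 1 by
      rw [mul_add, mul_one, mul_div_cancel₀ _ (hpos A).ne']; ring]
    exact ENNReal.ofReal_one
  have hincl : ∀ B, inclNbhd dep B = insert B (nbhd dep B) := by
    intro B
    ext A
    simp only [inclNbhd, nbhd, Finset.mem_filter, Finset.mem_univ, true_and, Finset.mem_insert]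
    tauto
  have hBn : ∀ B, B ∉ nbhd dep B := by intro B; simp [nbhd]
  have hpF : ∀ B, p B ≤ F B * ∏ A ∈ inclNbhd dep B, q A := by
    intro B
    have h1 : ENNReal.ofReal (x B * ∏ A ∈ nbhd dep B, (1 - x A))
        = ENNReal.ofReal (x B) * ∏ A ∈ nbhd dep B, q A := by
      rw [ENNReal.ofReal_mul (hx B).1.le, ENNReal.ofReal_prod_of_nonneg (fun A _ => (hpos A).le)]
    have h2 : ENNReal.ofReal (x B) = F B * q B := by
      rw [hF, hq, ← ENNReal.ofReal_mul (div_nonneg (hx B).1.le (hpos B).le),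
        div_mul_cancel₀ (x B) (hpos B).ne']
    calc p B ≤ ENNReal.ofReal (x B * ∏ A ∈ nbhd dep B, (1 - x A)) := hcrit B
      _ = F B * q B * ∏ A ∈ nbhd dep B, q A := by rw [h1, h2]
      _ = F B * ∏ A ∈ inclNbhd dep B, q A := by
          rw [hincl B, Finset.prod_insert (hBn B), mul_assoc]
  -- multiset-product lemma
  have hmult : ∀ I : Finset β,
      (∏ B ∈ I, ∏ A ∈ inclNbhd dep B, q A) * ∏ A ∈ I.biUnion (inclNbhd dep), (1 + F A) ≤ 1 := by
    intro I
    induction I using Finset.induction_on with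
    | empty => simp
    | @insert a s ha ih =>
      rw [Finset.prod_insert ha, Finset.biUnion_insert]
      set U := s.biUnion (inclNbhd dep) with hU
      have hsplit : ∏ A ∈ inclNbhd dep a ∪ U, (1 + F A)
          = (∏ A ∈ inclNbhd dep a \ U, (1 + F A)) * ∏ A ∈ U, (1 + F A) := by
        rw [← Finset.prod_union Finset.sdiff_disjoint, Finset.sdiff_union_self_eq_union]
      rw [hsplit]
      have hQa : (∏ A ∈ inclNbhd dep a, q A) * (∏ A ∈ inclNbhd dep a \ U, (1 + F A)) ≤ 1 := by
        have hsub : inclNbhd dep a \ U ⊆ inclNbhd dep a := Finset.sdiff_subset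
        rw [← Finset.prod_sdiff hsub]
        calc (∏ A ∈ inclNbhd dep a \ (inclNbhd dep a \ U), q A) *
              (∏ A ∈ inclNbhd dep a \ U, q A) * (∏ A ∈ inclNbhd dep a \ U, (1 + F A))
            = (∏ A ∈ inclNbhd dep a \ (inclNbhd dep a \ U), q A) *
              (∏ A ∈ inclNbhd dep a \ U, q A * (1 + F A)) := by
              rw [mul_assoc, Finset.prod_mul_distrib]
          _ = (∏ A ∈ inclNbhd dep a \ (inclNbhd dep a \ U), q A) * 1 := by
              rw [Finset.prod_congr rfl fun A _ => hqF A, Finset.prod_const_one]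
          _ ≤ 1 := by
              rw [mul_one]
              exact Finset.prod_le_one' fun A _ => hq1 A
      calc (∏ A ∈ inclNbhd dep a, q A) * (∏ B ∈ s, ∏ A ∈ inclNbhd dep B, q A) *
            ((∏ A ∈ inclNbhd dep a \ U, (1 + F A)) * ∏ A ∈ U, (1 + F A))
          = ((∏ A ∈ inclNbhd dep a, q A) * (∏ A ∈ inclNbhd dep a \ U, (1 + F A))) *
            ((∏ B ∈ s, ∏ A ∈ inclNbhd dep B, q A) * ∏ A ∈ U, (1 + F A)) := by ring
        _ ≤ 1 * 1 := mul_le_mul' hQa ih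
        _ = 1 := by rw [mul_one]
  -- key inequality
  have key : ∀ I : Finset β,
      (∏ B ∈ I, p B) * ∑ J ∈ stab dep I, ∏ A ∈ J, F A ≤ ∏ B ∈ I, F B := by
    intro I
    set N := I.biUnion (inclNbhd dep) with hN
    have hsum : ∑ J ∈ stab dep I, ∏ A ∈ J, F A ≤ ∏ A ∈ N, (1 + F A) := by
      have hsub : stab dep I ⊆ N.powerset := fun J hJ =>
        Finset.mem_powerset.mpr (Finset.mem_filter.mp hJ).2.2
      calc ∑ J ∈ stab dep I, ∏ A ∈ J, F A
          ≤ ∑ J ∈ N.powerset, ∏ A ∈ J, F A :=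
            Finset.sum_le_sum_of_subset hsub
        _ = ∏ A ∈ N, (F A + 1) := by
            rw [Finset.prod_add]
            exact Finset.sum_congr rfl fun t _ => by simp
        _ = ∏ A ∈ N, (1 + F A) := by
            exact Finset.prod_congr rfl fun A _ => add_comm _ _
    calc (∏ B ∈ I, p B) * ∑ J ∈ stab dep I, ∏ A ∈ J, F A
        ≤ (∏ B ∈ I, (F B * ∏ A ∈ inclNbhd dep B, q A)) * ∏ A ∈ N, (1 + F A) :=
          mul_le_mul' (Finset.prod_le_prod' fun B _ => hpF B) hsum
      _ = (∏ B ∈ I, F B) *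
          ((∏ B ∈ I, ∏ A ∈ inclNbhd dep B, q A) * ∏ A ∈ N, (1 + F A)) := by
          rw [Finset.prod_mul_distrib]; ring
      _ ≤ (∏ B ∈ I, F B) * 1 := mul_le_mul_right (hmult I) _
      _ = ∏ B ∈ I, F B := mul_one _
  -- main induction
  have main : ∀ h : ℕ, ∀ I : Finset β, muD dep p I h ≤ ∏ B ∈ I, F B := by
    intro h
    induction h with
    | zero =>
      intro I
      by_cases hI : I = ∅
      · subst hI; rw [muD_empty]; simp
      · haveI : IsEmpty {S : StableSeq dep I // S.depth ≤ 0} := by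
          constructor
          intro S
          apply hI
          rw [← S.1.root]
          have h0 : S.1.depth = 0 := Nat.le_zero.mp S.2
          have h2 := S.1.seq_depth
          rw [h0] at h2
          exact h2
        calc muD dep p I 0 = ∑' S : {S : StableSeq dep I // S.depth ≤ 0}, (0:ℝ≥0∞) :=
              tsum_congr fun S => isEmptyElim S
          _ = 0 := tsum_zero
          _ ≤ _ := zero_le
    | succ h ih =>
      intro I
      by_cases hI : I = ∅
      · subst hI; rw [muD_empty]; simp
      · calc muD dep p I (h + 1)
            ≤ (∏ B ∈ I, p B) * ∑ J ∈ stab dep I, muD dep p J h := muD_succ_le p hI h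
          _ ≤ (∏ B ∈ I, p B) * ∑ J ∈ stab dep I, ∏ A ∈ J, F A :=
              mul_le_mul_right (Finset.sum_le_sum fun J _ => ih J) _
          _ ≤ ∏ B ∈ I, F B := key I
  -- mu bound
  have hmu : ∀ I : Finset β, mu dep p I ≤ ∏ B ∈ I, F B := by
    intro I
    rw [mu, ENNReal.tsum_eq_iSup_sum]
    apply iSup_le
    intro s
    set h := s.sup (fun S => S.depth) with hh
    have hle : ∑ S ∈ s, S.weight p ≤ muD dep p I h := by
      rw [muD]
      have hsum := ENNReal.sum_le_tsum (f := fun S : {S : StableSeq dep I // S.depth ≤ h} =>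
        S.1.weight p) (s.attach.map
          (⟨fun S => ⟨S.1, Finset.le_sup S.2⟩, fun a b hab => Subtype.ext
            (congrArg (fun z : {S : StableSeq dep I // S.depth ≤ h} => z.1) hab)⟩ :
            {S : StableSeq dep I // S ∈ s} ↪ {S : StableSeq dep I // S.depth ≤ h}))
      rw [Finset.sum_map] at hsum
      exact (Finset.sum_attach s (fun S => S.weight p)).symm.le.trans hsum
    exact hle.trans (main h I)
  have hfinal : ∀ B : β, mu dep p {B} ≤ ENNReal.ofReal (x B / (1 - x B)) := by
    intro B
    have := hmu {B}
    rwa [Finset.prod_singleton] at this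
  exact ⟨fun B => lt_of_le_of_lt (hfinal B) ENNReal.ofReal_lt_top, hfinal⟩
end
end

section
/- Suppose the resampling table R has the property that no wdag in 𝔉¹_τ is compatible with R. Then every collectible wdag compatible with R lies in 𝔉⁰_τ (the set of collectible wdags G with w_{p^{1−ε}}(G) ≥ τ). -/
open scoped ENNReal BigOperators Classical

noncomputable section

variable {β : Type*}

/-- A witness DAG over bad-events β with dependency relation `dep`: a finite
acyclic labeled digraph in which two distinct vertices are joined by an edge
(in one direction or the other) iff their labels are dependent. Vertices are
drawn from ℕ. -/
structure WDag (β : Type*) (dep : β → β → Prop) where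
  verts : Finset ℕ
  Edge : ℕ → ℕ → Prop
  label : ℕ → β
  support : ∀ u v, Edge u v → u ∈ verts ∧ v ∈ verts
  acyclic : ∀ v, ¬ Relation.TransGen Edge v v
  edge_iff : ∀ u ∈ verts, ∀ v ∈ verts, u ≠ v →
    ((Edge u v ∨ Edge v u) ↔ dep (label u) (label v))

namespace WDag

variable {dep : β → β → Prop}

/-- depth(G): the maximum length of a directed path in G. -/
def depth (G : WDag β dep) : ℕ :=
  sSup {n | ∃ l : List ℕ, (∀ x ∈ l, x ∈ G.verts) ∧ l.Chain' G.Edge ∧ l.length = n}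

/-- v is a sink node of G. -/
def IsSink (G : WDag β dep) (v : ℕ) : Prop :=
  v ∈ G.verts ∧ ∀ w, ¬ G.Edge v w

/-- G has exactly one sink node. -/
def SingleSink (G : WDag β dep) : Prop := ∃! v, G.IsSink v

/-- H is a prefix of G: an induced subgraph closed under taking in-neighbors
(equivalently, H = G(U), the set of vertices with a directed path into U, for
some vertex set U). -/
def IsPrefix (H G : WDag β dep) : Prop :=
  H.verts ⊆ G.verts ∧ (∀ v ∈ H.verts, H.label v = G.label v) ∧
    (∀ u v, H.Edge u v ↔ (G.Edge u v ∧ u ∈ H.verts ∧ v ∈ H.verts)) ∧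
    (∀ u v, G.Edge u v → v ∈ H.verts → u ∈ H.verts)

end WDag

namespace WDag

variable {dep : β → β → Prop}

/-- The number of vertices u of G with i ∈ var(L(u)) and a directed path from
u to v (including v itself). -/
def ancCount {ι : Type*} (G : WDag β dep) (var : β → Finset ι) (v : ℕ) (i : ι) : ℕ :=
  (G.verts.filter fun u => i ∈ var (G.label u) ∧ Relation.ReflTransGen G.Edge u v).card

/-- The configuration X_{v,R} ∈ Σ^n associated to a vertex v of G and a
resampling table R. -/
def config {ι σα : Type*} (G : WDag β dep) (var : β → Finset ι)
    (R : ι → ℕ → σα) (v : ℕ) : ι → σα :=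
  fun i => R i (G.ancCount var v i - 1)

/-- G is compatible with the resampling table R: for every vertex v, the event
labeling v holds on the configuration X_{v,R}. -/
def Compatible {ι σα : Type*} (G : WDag β dep) (var : β → Finset ι)
    (f : β → (ι → σα) → Prop) (R : ι → ℕ → σα) : Prop :=
  ∀ v ∈ G.verts, f (G.label v) (G.config var R v)

end WDag

namespace WDag

variable {dep : β → β → Prop}

/-- The weight w_q(G) = Π_{v ∈ G} q(L(v)). -/
def wt (G : WDag β dep) (q : β → ℝ≥0∞) : ℝ≥0∞ :=
  ∏ v ∈ G.verts, q (G.label v)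

/-- sink(G): the (stable) set of labels of sink nodes. -/
def sinkSet (G : WDag β dep) : Finset β :=
  (G.verts.filter fun v => ∀ w, ¬ G.Edge v w).image G.label

/-- G is collectible: sink(G) ∈ stab(B) for some bad-event B. -/
def Collectible [Fintype β] (G : WDag β dep) : Prop :=
  ∃ B : β, G.sinkSet ∈ stab dep {B}

end WDag

/-- Membership in 𝔉¹_τ: a collectible wdag G with w_{p^{1-ε}}(G) < τ all of
whose collectible strict prefixes H satisfy w_{p^{1-ε}}(H) ≥ τ. -/
def memF1 [Fintype β] (dep : β → β → Prop) (p : β → ℝ≥0∞) (ε τ : ℝ)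
    (G : WDag β dep) : Prop :=
  G.Collectible ∧ G.wt (fun B => p B ^ ((1 : ℝ) - ε)) < ENNReal.ofReal τ ∧
    ∀ H : WDag β dep, H.IsPrefix G → H.verts ≠ G.verts → H.Collectible →
      ENNReal.ofReal τ ≤ H.wt (fun B => p B ^ ((1 : ℝ) - ε))


lemma prefix_compatible {β : Type*} {ι σα : Type*} {dep : β → β → Prop}
    {var : β → Finset ι} {f : β → (ι → σα) → Prop} {R : ι → ℕ → σα}
    {H G : WDag β dep} (hpre : H.IsPrefix G) (hG : G.Compatible var f R) :
    H.Compatible var f R := by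
  obtain ⟨hsub, hlab, hedge, hclosed⟩ := hpre
  have hanc : ∀ v ∈ H.verts, ∀ u, Relation.ReflTransGen G.Edge u v →
      u ∈ H.verts ∧ Relation.ReflTransGen H.Edge u v := by
    intro v hv u hrt
    induction hrt using Relation.ReflTransGen.head_induction_on with
    | refl => exact ⟨hv, .refl⟩
    | head hab _ ih =>
        obtain ⟨hb, hrtb⟩ := ih
        have ha := hclosed _ _ hab hb
        exact ⟨ha, .head ((hedge _ _).2 ⟨hab, ha, hb⟩) hrtb⟩
  have hcount : ∀ v ∈ H.verts, ∀ i, H.ancCount var v i = G.ancCount var v i := by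
    intro v hv i
    unfold WDag.ancCount
    congr 1
    ext u
    simp only [Finset.mem_filter]
    constructor
    · rintro ⟨hu, hi, hrt⟩
      refine ⟨hsub hu, by rwa [hlab u hu] at hi, ?_⟩
      exact Relation.ReflTransGen.mono (fun a b h => ((hedge a b).1 h).1) _ _ hrt
    · rintro ⟨hu, hi, hrt⟩
      obtain ⟨hu', hrt'⟩ := hanc v hv u hrt
      exact ⟨hu', by rwa [hlab u hu'], hrt'⟩
  intro v hv
  have hc : H.config var R v = G.config var R v := by
    funext i; unfold WDag.config; rw [hcount v hv]
  rw [hlab v hv, hc]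
  exact hG v (hsub hv)

/-- if no wdag of 𝔉¹_τ is compatible with the resampling table R,
then every collectible wdag compatible with R lies in 𝔉⁰_τ, i.e. satisfies
w_{p^{1-ε}}(G) ≥ τ. -/
theorem compatible_collectible_in_F0 {ι σα : Type*} [Fintype β]
    (dep : β → β → Prop) (hsym : Symmetric dep)
    (var : β → Finset ι) (f : β → (ι → σα) → Prop) (R : ι → ℕ → σα)
    (p : β → ℝ≥0∞) (hp : ∀ B, p B ≤ 1) (ε τ : ℝ)
    (hε : 0 < ε ∧ ε < 1 / 2) (hτ : 0 < τ ∧ τ < 1 / 2)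
    (hF1 : ∀ G : WDag β dep, memF1 dep p ε τ G → ¬ G.Compatible var f R) :
    ∀ G : WDag β dep, G.Collectible → G.Compatible var f R →
      ENNReal.ofReal τ ≤ G.wt (fun B => p B ^ ((1 : ℝ) - ε)) := by
  have key : ∀ n : ℕ, ∀ G : WDag β dep, G.verts.card = n → G.Collectible →
      G.Compatible var f R → ENNReal.ofReal τ ≤ G.wt (fun B => p B ^ ((1 : ℝ) - ε)) := by
    intro n
    induction n using Nat.strong_induction_on with
    | _ n ih =>
      intro G hn hcol hcompat
      by_contra hlt
      push_neg at hlt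
      refine hF1 G ⟨hcol, hlt, ?_⟩ hcompat
      intro H hpre hne hHcol
      by_contra hH
      push_neg at hH
      have hcard : H.verts.card < n := by
        subst hn
        exact Finset.card_lt_card (lt_of_le_of_ne hpre.1 hne)
      exact absurd (ih _ hcard H rfl hHcol (prefix_compatible hpre hcompat)) (not_le.2 hH)
  exact fun G => key G.verts.card G rfl
end
end
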